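/- The subgroup of GL(2,ℂ) generated by the two matrices a = i·[[1,0],[0,−1]] and b = (i/2)·[[−1,−√3],[−√3,1]] is a finite group of order 12. -/

import Mathlib

open Matrix Complex

noncomputable section

/-- a = i·[[1,0],[0,−1]]. -/
def ma : Matrix (Fin 2) (Fin 2) ℂ := Complex.I • !![1, 0; 0, -1]

/-- b = (i/2)·[[−1,−√3],[−√3,1]]. -/
def mb : Matrix (Fin 2) (Fin 2) ℂ :=
  (Complex.I / 2) • !![-1, -(Real.sqrt 3 : ℂ); -(Real.sqrt 3 : ℂ), 1]

/-!
With `x = a b`, the relations `a² = b² = (a b)³ = -1` say that `a` inverts `x` by conjugation and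
that `a² = x³` has order 2, so `x⁶ = 1` and `⟨a, b⟩ = ⟨x⟩ ∪ a⟨x⟩` has at most 12 elements: it is
the dicyclic group `ℤ₃ ⋊ ℤ₄`. Conversely `a` has order 4 and `x²` has order 3, so 12 divides the
order of `⟨a, b⟩`.
-/

open Subgroup Pointwise

section Dicyclic

variable {G : Type*} [Group G] {a x : G}

lemma zpow_mul_eq_mul_zpow_neg (hxa : x * a = a * x⁻¹) (j : ℤ) : x ^ j * a = a * x ^ (-j) := by
  have h : SemiconjBy a x⁻¹ x := hxa.symm
  simpa [_root_.inv_zpow'] using (h.zpow_right j).eq.symm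

lemma mul_zpow_mul_mul_zpow (ha : a ^ 2 = x ^ 3) (hxa : x * a = a * x⁻¹) (i j : ℤ) :
    a * x ^ i * (a * x ^ j) = x ^ (3 - i + j) := by
  have haa : a * a = x ^ (3 : ℤ) := by rw [← sq, ha, zpow_ofNat]
  rw [mul_assoc, ← mul_assoc (x ^ i), zpow_mul_eq_mul_zpow_neg hxa, ← mul_assoc, ← mul_assoc,
    haa, mul_assoc, ← _root_.zpow_add, ← _root_.zpow_add, sub_eq_add_neg, add_assoc]

lemma pow_six_eq_one_of_sq_eq_pow_three (ha : a ^ 2 = x ^ 3) (hxa : x * a = a * x⁻¹) :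
    x ^ 6 = 1 := by
  have h_inv : x ^ 3 * a = a * (x ^ 3)⁻¹ := by
    simpa [_root_.zpow_neg] using zpow_mul_eq_mul_zpow_neg hxa 3
  have h_comm : x ^ 3 * a = a * x ^ 3 := by rw [← ha, ← pow_succ, pow_succ']
  rwa [h_comm, mul_right_inj, eq_inv_iff_mul_eq_one, ← pow_add] at h_inv

def dicyclicSubgroup (ha : a ^ 2 = x ^ 3) (hxa : x * a = a * x⁻¹) : Subgroup G where
  carrier := (zpowers x : Set G) ∪ a • (zpowers x : Set G)
  one_mem' := Or.inl (one_mem _)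
  mul_mem' := by
    have hl (j : ℤ) : x ^ j ∈ (zpowers x : Set G) ∪ a • (zpowers x : Set G) :=
      Or.inl (zpow_mem_zpowers x j)
    have hr (j : ℤ) : a * x ^ j ∈ (zpowers x : Set G) ∪ a • (zpowers x : Set G) :=
      Or.inr (Set.smul_mem_smul_set (zpow_mem_zpowers x j))
    intro g h hg hh
    simp only [Set.mem_union, SetLike.mem_coe, mem_zpowers_iff, Set.mem_smul_set,
      smul_eq_mul] at hg hh
    rcases hg with ⟨i, rfl⟩ | ⟨_, ⟨i, rfl⟩, rfl⟩ <;> rcases hh with ⟨j, rfl⟩ | ⟨_, ⟨j, rfl⟩, rfl⟩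
    · rw [← _root_.zpow_add]; exact hl _
    · rw [← mul_assoc, zpow_mul_eq_mul_zpow_neg hxa, mul_assoc, ← _root_.zpow_add]; exact hr _
    · rw [mul_assoc, ← _root_.zpow_add]; exact hr _
    · rw [mul_zpow_mul_mul_zpow ha hxa]; exact hl _
  inv_mem' := by
    intro g hg
    simp only [Set.mem_union, SetLike.mem_coe, mem_zpowers_iff, Set.mem_smul_set,
      smul_eq_mul] at hg ⊢
    rcases hg with ⟨i, rfl⟩ | ⟨_, ⟨i, rfl⟩, rfl⟩
    · exact Or.inl ⟨-i, _root_.zpow_neg x i⟩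
    · refine Or.inr ⟨x ^ (i + 3), ⟨i + 3, rfl⟩, eq_inv_of_mul_eq_one_right ?_⟩
      rw [mul_zpow_mul_mul_zpow ha hxa, show 3 - i + (i + 3) = ((6 : ℕ) : ℤ) by push_cast; ring,
        zpow_natCast, pow_six_eq_one_of_sq_eq_pow_three ha hxa]

lemma finite_dicyclicSubgroup (ha : a ^ 2 = x ^ 3) (hxa : x * a = a * x⁻¹) :
    Finite (dicyclicSubgroup ha hxa) := by
  have hx : IsOfFinOrder x :=
    isOfFinOrder_iff_pow_eq_one.2 ⟨6, by norm_num, pow_six_eq_one_of_sq_eq_pow_three ha hxa⟩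
  exact (hx.finite_zpowers.union hx.finite_zpowers.smul_set).to_subtype

lemma card_dicyclicSubgroup_le (ha : a ^ 2 = x ^ 3) (hxa : x * a = a * x⁻¹) :
    Nat.card (dicyclicSubgroup ha hxa) ≤ 2 * orderOf x :=
  calc Nat.card (dicyclicSubgroup ha hxa)
      = ((zpowers x : Set G) ∪ a • (zpowers x : Set G)).ncard := Nat.card_coe_set_eq _
    _ ≤ (zpowers x : Set G).ncard + (a • (zpowers x : Set G)).ncard := Set.ncard_union_le _ _
    _ = 2 * orderOf x := by
      rw [Set.ncard_smul_set, ← Nat.card_coe_set_eq, SetLike.coe_sort_coe, Nat.card_zpowers,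
        two_mul]

end Dicyclic

lemma mul_mul_eq_mul_mul_inv_of_sq_eq_sq {G : Type*} [Group G] {a b : G} (hb : b ^ 2 = a ^ 2)
    (ha4 : a ^ 4 = 1) : a * b * a = a * (a * b)⁻¹ := by
  have hba : b * a = b⁻¹ * a⁻¹ :=
    calc b * a = b⁻¹ * (b ^ 2 * a ^ 2) * a⁻¹ := by group
      _ = b⁻¹ * a⁻¹ := by rw [hb, ← pow_add, ha4, mul_one]
  rw [_root_.mul_inv_rev, mul_assoc, hba]

theorem card_closure_pair_eq_twelve {G : Type*} [Group G] {a b : G} (hb : b ^ 2 = a ^ 2)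
    (hab : (a * b) ^ 3 = a ^ 2) (ha4 : a ^ 4 = 1) (ha2 : a ^ 2 ≠ 1) (hab2 : (a * b) ^ 2 ≠ 1) :
    Nat.card (closure {a, b}) = 12 := by
  set x := a * b with hx
  have hxa : x * a = a * x⁻¹ := mul_mul_eq_mul_mul_inv_of_sq_eq_sq hb ha4
  have hx6 := pow_six_eq_one_of_sq_eq_pow_three hab.symm hxa
  have hb_eq : b = a * x ^ 4 :=
    calc b = a ^ 4 * b := by rw [ha4, one_mul]
      _ = a * a ^ 2 * x := by rw [hx]; group
      _ = a * x ^ 4 := by rw [← hab, mul_assoc, ← pow_succ]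
  have hle : closure {a, b} ≤ dicyclicSubgroup hab.symm hxa := by
    refine (closure_le _).2 (Set.insert_subset ?_ (Set.singleton_subset_iff.2 ?_))
    · exact Or.inr ⟨1, one_mem _, mul_one a⟩
    · exact Or.inr ⟨x ^ 4, npow_mem_zpowers x 4, hb_eq.symm⟩
  have := finite_dicyclicSubgroup hab.symm hxa
  have : Finite (closure {a, b}) := Finite.Set.subset (dicyclicSubgroup hab.symm hxa : Set G) hle
  have h_le : Nat.card (closure {a, b}) ≤ 12 :=
    calc Nat.card (closure {a, b}) ≤ 2 * orderOf x := (card_le_of_le hle).trans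
          (card_dicyclicSubgroup_le hab.symm hxa)
      _ ≤ 2 * 6 := by gcongr; exact orderOf_le_of_pow_eq_one (by norm_num) hx6
  have h4 : 4 ∣ Nat.card (closure {a, b}) := by
    have : orderOf a = 4 := orderOf_eq_prime_pow (p := 2) (n := 1) (by simpa using ha2) ha4
    exact this ▸ orderOf_dvd_natCard _ (subset_closure (by simp))
  have h3 : 3 ∣ Nat.card (closure {a, b}) := by
    have : orderOf (x ^ 2) = 3 := orderOf_eq_prime (by rw [← pow_mul, hx6]) hab2
    exact this ▸ orderOf_dvd_natCard _
      (pow_mem (mul_mem (subset_closure (by simp)) (subset_closure (by simp))) 2)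
  have h12 := Nat.Coprime.mul_dvd_of_dvd_of_dvd (by norm_num) h4 h3
  exact le_antisymm h_le (Nat.le_of_dvd Nat.card_pos h12)

lemma ofReal_sqrt_three_sq : (Real.sqrt 3 : ℂ) ^ 2 = 3 := by
  rw [← Complex.ofReal_pow, Real.sq_sqrt (by norm_num)]; norm_num

lemma ma_sq : ma ^ 2 = -1 := by
  ext i j; fin_cases i <;> fin_cases j <;> simp [ma, sq]

lemma mb_sq : mb ^ 2 = -1 := by
  ext i j
  fin_cases i <;> fin_cases j <;> simp [mb, sq] <;> ring_nf <;> norm_num [ofReal_sqrt_three_sq]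

lemma ma_mul_mb : ma * mb = !![1 / 2, (Real.sqrt 3 : ℂ) / 2; -(Real.sqrt 3 : ℂ) / 2, 1 / 2] := by
  ext i j; fin_cases i <;> fin_cases j <;> simp [ma, mb] <;> ring_nf <;> norm_num

lemma ma_mul_mb_sq :
    (ma * mb) ^ 2 = !![-1 / 2, (Real.sqrt 3 : ℂ) / 2; -(Real.sqrt 3 : ℂ) / 2, -1 / 2] := by
  rw [ma_mul_mb]
  ext i j
  fin_cases i <;> fin_cases j <;> simp [sq] <;> ring_nf <;> norm_num [ofReal_sqrt_three_sq]

lemma ma_mul_mb_pow_three : (ma * mb) ^ 3 = -1 := by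
  rw [pow_succ, ma_mul_mb_sq, ma_mul_mb]
  ext i j
  fin_cases i <;> fin_cases j <;> simp <;> ring_nf <;> norm_num [ofReal_sqrt_three_sq]

lemma ma_sq_ne_one : ma ^ 2 ≠ 1 := by
  rw [ma_sq]
  intro h
  have := congrFun (congrFun h 0) 0
  norm_num at this

lemma ma_mul_mb_sq_ne_one : (ma * mb) ^ 2 ≠ 1 := by
  rw [ma_mul_mb_sq]
  intro h
  have := congrFun (congrFun h 0) 0
  norm_num at this

/-- The subgroup of GL(2,ℂ) generated by a and b is a finite group of order 12. -/
theorem stmt7 (a b : GL (Fin 2) ℂ)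
    (ha : (a : Matrix (Fin 2) (Fin 2) ℂ) = ma)
    (hb : (b : Matrix (Fin 2) (Fin 2) ℂ) = mb) :
    Nat.card (Subgroup.closure ({a, b} : Set (GL (Fin 2) ℂ))) = 12 := by
  refine card_closure_pair_eq_twelve ?_ ?_ ?_ ?_ ?_
  · ext1; rw [Units.val_pow_eq_pow_val, Units.val_pow_eq_pow_val, ha, hb, ma_sq, mb_sq]
  · ext1
    rw [Units.val_pow_eq_pow_val, Units.val_pow_eq_pow_val, Units.val_mul, ha, hb,
      ma_mul_mb_pow_three, ma_sq]
  · ext1; rw [Units.val_pow_eq_pow_val, ha, show 4 = 2 * 2 from rfl, pow_mul, ma_sq]; norm_num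
  · exact fun h => ma_sq_ne_one (by simpa [ha] using congrArg Units.val h)
  · exact fun h => ma_mul_mb_sq_ne_one (by simpa [ha, hb] using congrArg Units.val h)
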